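/- arXiv:2401.03535 — 3 statements merged into one kernel-verified Lean document; each statement's English description precedes it below -/
import Mathlib

section
/- The semigroup generated by the matrices E = [[4,0],[0,1]] and F = [[4,0],[1,1]] (under matrix multiplication) is free: any two products of these matrices in different orders are distinct matrices. -/
/-- E = [[4,0],[0,1]] -/
def Egen : Matrix (Fin 2) (Fin 2) ℤ := !![4, 0; 0, 1]

/-- F = [[4,0],[1,1]] -/
def Fgen : Matrix (Fin 2) (Fin 2) ℤ := !![4, 0; 1, 1]

/-- Product of the word `l` in the generators E (for `false`) and F (for `true`). -/
def wordProd (l : List Bool) : Matrix (Fin 2) (Fin 2) ℤ :=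
  (l.map (fun b => if b then Fgen else Egen)).prod

def wval : List Bool → ℤ
  | [] => 0
  | b :: l => (if b then (4:ℤ)^l.length else 0) + wval l

lemma wval_nonneg (l : List Bool) : 0 ≤ wval l := by
  induction l with
  | nil => simp [wval]
  | cons b l ih =>
    have : (0:ℤ) ≤ (if b then (4:ℤ)^l.length else 0) := by positivity
    simp only [wval]; linarith

lemma wval_lt (l : List Bool) : wval l < 4 ^ l.length := by
  induction l with
  | nil => simp [wval]
  | cons b l ih =>
    have h4 : (if b then (4:ℤ)^l.length else 0) ≤ 4 ^ l.length := by
      split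
      · exact le_refl _
      · positivity
    have : (4:ℤ)^l.length + 4^l.length ≤ 4 ^ (l.length + 1) := by
      rw [pow_succ]
      have : (0:ℤ) < 4 ^ l.length := by positivity
      linarith
    simp only [wval, List.length_cons]
    linarith

lemma wordProd_eq (l : List Bool) :
    wordProd l = !![4 ^ l.length, 0; wval l, 1] := by
  induction l with
  | nil =>
    simp [wordProd, wval]
    ext i j
    fin_cases i <;> fin_cases j <;> simp [Matrix.one_apply]
  | cons b l ih =>
    have : wordProd (b :: l) = (if b then Fgen else Egen) * wordProd l := by
      simp [wordProd]
    rw [this, ih]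
    cases b <;>
    · simp only [if_true, if_false, Egen, Fgen, wval, List.length_cons]
      ext i j
      fin_cases i <;> fin_cases j <;>
        simp [Matrix.mul_apply, Fin.sum_univ_two, pow_succ] <;> ring

lemma wval_inj : ∀ l₁ l₂ : List Bool, l₁.length = l₂.length →
    wval l₁ = wval l₂ → l₁ = l₂ := by
  intro l₁
  induction l₁ with
  | nil => intro l₂ hlen _; exact (List.length_eq_zero_iff.mp hlen.symm).symm
  | cons b₁ l₁ ih =>
    intro l₂ hlen hv
    cases l₂ with
    | nil => simp at hlen
    | cons b₂ l₂ =>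
      simp only [List.length_cons, Nat.add_right_cancel_iff] at hlen
      simp only [wval, hlen] at hv
      have hb : b₁ = b₂ := by
        by_contra hne
        have h1 := wval_nonneg l₁
        have h2 := wval_nonneg l₂
        have h3 := wval_lt l₁
        have h4 := wval_lt l₂
        rw [hlen] at h3
        cases b₁ <;> cases b₂ <;> simp_all <;> linarith
      subst hb
      have : wval l₁ = wval l₂ := by
        cases b₁ <;> simp at hv <;> linarith
      rw [ih l₂ hlen this]

/-- The semigroup generated by E and F is free: distinct nonempty words give
distinct matrices. -/
theorem free_semigroup_EF (l₁ l₂ : List Bool) (h₁ : l₁ ≠ []) (h₂ : l₂ ≠ [])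
    (h : wordProd l₁ = wordProd l₂) : l₁ = l₂ := by
  rw [wordProd_eq, wordProd_eq] at h
  have h00 : (4:ℤ) ^ l₁.length = 4 ^ l₂.length := by
    have := congrFun (congrFun h 0) 0; simpa using this
  have h10 : wval l₁ = wval l₂ := by
    have := congrFun (congrFun h 1) 0; simpa using this
  have hlen : l₁.length = l₂.length := by
    have h' : ((4 ^ l₁.length : ℕ) : ℤ) = ((4 ^ l₂.length : ℕ) : ℤ) := by push_cast; exact h00
    exact Nat.pow_right_injective (by norm_num) (Nat.cast_injective h')
  exact wval_inj l₁ l₂ hlen h10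
end

section
/- There do not exist matrices X, Y in the semigroup generated by E = [[4,0],[0,1]] and F = [[4,0],[1,1]] such that XE = YF. -/
lemma wordProd_entries (l : List Bool) :
    wordProd l 0 1 = 0 ∧ wordProd l 1 1 = 1 := by
  induction l with
  | nil => simp [wordProd, Matrix.one_apply]
  | cons b l ih =>
    have h : wordProd (b :: l) = (if b then Fgen else Egen) * wordProd l := by
      simp [wordProd]
    obtain ⟨h1, h2⟩ := ih
    cases b <;>
      simp [h, Matrix.mul_apply, Fin.sum_univ_two, Egen, Fgen, h1, h2]

/-- There are no X, Y in the semigroup generated by E and F with XE = YF. -/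
theorem no_XE_eq_YF :
    ¬ ∃ (l₁ l₂ : List Bool), l₁ ≠ [] ∧ l₂ ≠ [] ∧
      wordProd l₁ * Egen = wordProd l₂ * Fgen := by
  rintro ⟨l₁, l₂, -, -, h⟩
  have h10 := congrFun (congrFun h 1) 0
  have e1 := (wordProd_entries l₁).2
  have e2 := (wordProd_entries l₂).2
  simp [Matrix.mul_apply, Fin.sum_univ_two, Egen, Fgen, e1, e2] at h10
  omega
end

section
/- For every m ≥ 0 and every x > 0, f₂^m(f₁(x)) < f₁^m(f₂(x)), where f₁(x) = x/(4x+4) and f₂(x) = x/4. -/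
/-- f₁(x) = x/(4x+4) -/
noncomputable def f1 (x : ℝ) : ℝ := x / (4*x + 4)

/-- f₂(x) = x/4 -/
noncomputable def f2 (x : ℝ) : ℝ := x / 4

/-! In the coordinate `y = 1/x` the maps become `y ↦ 4y + 4` and `y ↦ 4y`. Hence the gap
`d = 1/f₂^m(f₁ x) - 1/f₁^m(f₂ x)` between the two reciprocals starts at `d = 4` for `m = 0` and
evolves by `d ↦ 4d - 4`, so it stays at least `4`; a positive gap of reciprocals is the claim. -/

lemma f1_pos {x : ℝ} (hx : 0 < x) : 0 < f1 x := by
  unfold f1; positivity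

lemma f2_pos {x : ℝ} (hx : 0 < x) : 0 < f2 x := by
  unfold f2; positivity

lemma mapsTo_f1_Ioi : Set.MapsTo f1 (Set.Ioi 0) (Set.Ioi 0) := fun _ => f1_pos

lemma mapsTo_f2_Ioi : Set.MapsTo f2 (Set.Ioi 0) (Set.Ioi 0) := fun _ => f2_pos

lemma inv_f1 {x : ℝ} (hx : x ≠ 0) : (f1 x)⁻¹ = 4 * (x⁻¹ + 1) := by
  unfold f1
  rw [inv_div]
  field_simp
  ring

lemma inv_f2 (x : ℝ) : (f2 x)⁻¹ = 4 * x⁻¹ := by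
  unfold f2
  rw [inv_div, div_eq_mul_inv, mul_comm]

lemma four_le_inv_f2_sub_inv_f1 {a b : ℝ} (hb : 0 < b) (h : 4 ≤ a⁻¹ - b⁻¹) :
    4 ≤ (f2 a)⁻¹ - (f1 b)⁻¹ := by
  rw [inv_f2, inv_f1 hb.ne']
  linarith

lemma four_le_inv_iterate_sub {x : ℝ} (hx : 0 < x) (m : ℕ) :
    4 ≤ (f2^[m] (f1 x))⁻¹ - (f1^[m] (f2 x))⁻¹ := by
  induction m with
  | zero =>
    rw [Function.iterate_zero_apply, Function.iterate_zero_apply, inv_f1 hx.ne', inv_f2]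
    linarith
  | succ m ih =>
    rw [Function.iterate_succ_apply', Function.iterate_succ_apply']
    exact four_le_inv_f2_sub_inv_f1 (mapsTo_f1_Ioi.iterate m (f2_pos hx)) ih

/-- For every m ≥ 0 and every x > 0, f₂^m(f₁(x)) < f₁^m(f₂(x)). -/
theorem key_inequality (m : ℕ) (x : ℝ) (hx : 0 < x) :
    f2^[m] (f1 x) < f1^[m] (f2 x) := by
  have ha : 0 < f2^[m] (f1 x) := mapsTo_f2_Ioi.iterate m (f1_pos hx)
  have hb : 0 < f1^[m] (f2 x) := mapsTo_f1_Ioi.iterate m (f2_pos hx)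
  rw [← inv_lt_inv₀ hb ha]
  linarith [four_le_inv_iterate_sub hx m]
end
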